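/- arXiv:2108.13227 — 2 statements merged into one kernel-verified Lean document; each statement's English description precedes it below -/
import Mathlib

section
/- Let P = [a]×[b]. The antichain cardinality statistic I ↦ #max(I) on J(P) can be written as ab/(a+b) plus an ℝ-linear combination of the signed toggleability statistics T_{i,j}; consequently, the average of #max(I) along any rowmotion orbit is ab/(a+b). -/
open scoped Classical
open Finset

variable {P : Type*} [Fintype P] [PartialOrder P]

/-- `I` is an order ideal (downward-closed subset) of the finite poset `P`. -/
def IsIdeal (I : Finset P) : Prop := ∀ ⦃x y : P⦄, x ≤ y → y ∈ I → x ∈ I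

/-- `p` is a minimal element of the complement `P \ I`. -/
def CanTogIn (I : Finset P) (p : P) : Prop := p ∉ I ∧ ∀ q, q < p → q ∈ I

/-- `p` is a maximal element of `I`. -/
def CanTogOut (I : Finset P) (p : P) : Prop := p ∈ I ∧ ∀ q, p < q → q ∉ I

/-- Rowmotion: the order ideal generated by the minimal elements of `P \ I`. -/
noncomputable def rowmotion (I : Finset P) : Finset P :=
  univ.filter fun x => ∃ y, CanTogIn I y ∧ x ≤ y

/-- Toggleability statistic `T⁺_p`. -/
noncomputable def Tin (p : P) (I : Finset P) : ℝ := if CanTogIn I p then 1 else 0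

/-- Toggleability statistic `T⁻_p`. -/
noncomputable def Tout (p : P) (I : Finset P) : ℝ := if CanTogOut I p then 1 else 0

/-- Signed toggleability statistic `T_p = T⁺_p - T⁻_p`. -/
noncomputable def Tsgn (p : P) (I : Finset P) : ℝ := Tin p I - Tout p I

/-!
Think of an order ideal `I` of `[a] × [b]` as a Young diagram. A row contains at most one
maximal element of `I` and at most one minimal element of its complement, and row `i` contains a
maximal element exactly when row `i + 1` contains a minimal element of the complement: both say
that row `i + 1` is shorter than row `i`. Summation by parts along rows therefore reduces
`∑ p, (w (i + 1) T⁻_p - w i T⁺_p)`, for any weight `w` of the row index `i`, to two boundary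
terms, and the same holds along columns. For the weights `b i + a j - a b` the boundary terms
cancel, which gives `(a + b) #max(I) = a b + ∑ p, (b i + a j - a b) T_p(I)`.
The orbit average follows because `T⁺_p(I) = T⁻_p(rowmotion I)`, so `T_p` telescopes along an
orbit.
-/

section OrderIso

variable {X Y : Type*} [PartialOrder X] [PartialOrder Y] (e : X ≃o Y) {I : Finset X} {p : X}

lemma IsIdeal.map_orderIso (hI : IsIdeal I) : IsIdeal (I.map e.toEquiv.toEmbedding) := by
  intro x y hxy hy
  obtain ⟨y', hy', rfl⟩ := mem_map.1 hy
  exact mem_map.2 ⟨e.symm x, hI (e.symm_apply_le.2 hxy) hy', e.apply_symm_apply x⟩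

lemma canTogOut_map_orderIso_iff :
    CanTogOut (I.map e.toEquiv.toEmbedding) (e p) ↔ CanTogOut I p := by
  simp [CanTogOut, e.surjective.forall]

lemma canTogIn_map_orderIso_iff :
    CanTogIn (I.map e.toEquiv.toEmbedding) (e p) ↔ CanTogIn I p := by
  simp [CanTogIn, e.surjective.forall]

lemma Tout_map_orderIso : Tout (e p) (I.map e.toEquiv.toEmbedding) = Tout p I := by
  simp only [Tout, canTogOut_map_orderIso_iff]

lemma Tin_map_orderIso : Tin (e p) (I.map e.toEquiv.toEmbedding) = Tin p I := by
  simp only [Tin, canTogIn_map_orderIso_iff]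

end OrderIso

section Antichain

variable {X : Type*} [PartialOrder X] {I : Finset X} {p q : X}

lemma CanTogOut.eq_of_le (hp : CanTogOut I p) (hq : CanTogOut I q) (hpq : p ≤ q) : p = q :=
  hpq.eq_or_lt.resolve_right fun h => hp.2 q h hq.1

lemma CanTogIn.eq_of_le (hp : CanTogIn I p) (hq : CanTogIn I q) (hpq : p ≤ q) : p = q :=
  hpq.eq_or_lt.resolve_right fun h => hp.1 (hq.2 p h)

end Antichain

lemma sum_boole_eq_ite_exists {β : Type*} [LinearOrder β] [Fintype β] {f : β → Prop}
    (hf : ∀ j k, f j → f k → j ≤ k → j = k) :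
    ∑ j, (if f j then (1 : ℝ) else 0) = if ∃ j, f j then 1 else 0 := by
  split_ifs with h
  · obtain ⟨j, hj⟩ := h
    rw [sum_eq_single j (fun k _ hkj => if_neg fun hk => hkj ?_) (by simp), if_pos hj]
    rcases le_total j k with hjk | hkj'
    · exact (hf j k hj hk hjk).symm
    · exact hf k j hk hj hkj'
  · exact sum_eq_zero fun j _ => if_neg fun hj => h ⟨j, hj⟩

section Rows

variable {α β : Type*} [PartialOrder α] [LinearOrder β] [Fintype β] {I : Finset (α × β)}

lemma exists_canTogOut_row_iff (hI : IsIdeal I) (i : α) :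
    (∃ j, CanTogOut I (i, j)) ↔ ∃ j, (i, j) ∈ I ∧ ∀ i', i < i' → (i', j) ∉ I := by
  constructor
  · rintro ⟨j, hj, hmax⟩
    exact ⟨j, hj, fun i' hi' => hmax _ (Prod.mk_lt_mk_of_lt_of_le hi' le_rfl)⟩
  · rintro ⟨j, hj, habove⟩
    obtain ⟨k, hk, hkmax⟩ := (univ.filter fun k => (i, k) ∈ I).exists_max_image id
      ⟨j, mem_filter.2 ⟨mem_univ _, hj⟩⟩
    have hjk : j ≤ k := hkmax j (mem_filter.2 ⟨mem_univ _, hj⟩)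
    refine ⟨k, (mem_filter.1 hk).2, fun q hq hqI => ?_⟩
    obtain ⟨h1, h2⟩ := Prod.mk_le_mk.1 hq.le
    rcases h1.eq_or_lt with rfl | hlt
    · have hkq : k < q.2 := lt_of_le_of_ne h2 fun h => hq.ne (Prod.ext rfl h)
      exact hkq.not_ge (hkmax q.2 (mem_filter.2 ⟨mem_univ _, hqI⟩))
    · exact habove q.1 hlt (hI (Prod.mk_le_mk.2 ⟨le_rfl, hjk.trans h2⟩) hqI)

lemma exists_canTogIn_row_iff (hI : IsIdeal I) (i : α) :
    (∃ j, CanTogIn I (i, j)) ↔ ∃ j, (i, j) ∉ I ∧ ∀ i', i' < i → (i', j) ∈ I := by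
  constructor
  · rintro ⟨j, hj, hmin⟩
    exact ⟨j, hj, fun i' hi' => hmin _ (Prod.mk_lt_mk_of_lt_of_le hi' le_rfl)⟩
  · rintro ⟨j, hj, hbelow⟩
    obtain ⟨k, hk, hkmin⟩ := (univ.filter fun k => (i, k) ∉ I).exists_min_image id
      ⟨j, mem_filter.2 ⟨mem_univ _, hj⟩⟩
    have hkj : k ≤ j := hkmin j (mem_filter.2 ⟨mem_univ _, hj⟩)
    refine ⟨k, (mem_filter.1 hk).2, fun q hq => ?_⟩
    obtain ⟨h1, h2⟩ := Prod.mk_le_mk.1 hq.le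
    rcases h1.eq_or_lt with h | hlt
    · have hqk : q.2 < k := lt_of_le_of_ne h2 fun h' => hq.ne (Prod.ext h h')
      by_contra hqI
      exact hqk.not_ge (hkmin q.2 (mem_filter.2 ⟨mem_univ _, by rwa [← h]⟩))
    · exact hI (Prod.mk_le_mk.2 ⟨le_rfl, h2.trans hkj⟩) (hbelow q.1 hlt)

lemma sum_Tout_row (i : α) :
    ∑ j, Tout (i, j) I = if ∃ j, CanTogOut I (i, j) then 1 else 0 :=
  sum_boole_eq_ite_exists fun _ _ hj hk hjk =>
    congrArg Prod.snd (hj.eq_of_le hk (Prod.mk_le_mk.2 ⟨le_rfl, hjk⟩))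

lemma sum_Tin_row (i : α) :
    ∑ j, Tin (i, j) I = if ∃ j, CanTogIn I (i, j) then 1 else 0 :=
  sum_boole_eq_ite_exists fun _ _ hj hk hjk =>
    congrArg Prod.snd (hj.eq_of_le hk (Prod.mk_le_mk.2 ⟨le_rfl, hjk⟩))

end Rows

section FinRows

variable {n : ℕ} {β : Type*} [LinearOrder β] [Fintype β] {I : Finset (Fin (n + 1) × β)}

lemma exists_canTogOut_castSucc_iff_exists_canTogIn_succ (hI : IsIdeal I) (i : Fin n) :
    (∃ j, CanTogOut I (i.castSucc, j)) ↔ ∃ j, CanTogIn I (i.succ, j) := by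
  rw [exists_canTogOut_row_iff hI, exists_canTogIn_row_iff hI]
  refine exists_congr fun j => ⟨fun ⟨hin, habove⟩ => ?_, fun ⟨hout, hbelow⟩ => ?_⟩
  · refine ⟨habove _ Fin.castSucc_lt_succ, fun i' hi' => ?_⟩
    exact hI (Prod.mk_le_mk.2 ⟨Fin.le_castSucc_iff.2 hi', le_rfl⟩) hin
  · refine ⟨hbelow _ Fin.castSucc_lt_succ, fun i' hi' hi'I => hout ?_⟩
    exact hI (Prod.mk_le_mk.2 ⟨Fin.castSucc_lt_iff_succ_le.1 hi', le_rfl⟩) hi'I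

lemma exists_canTogOut_last_iff (hI : IsIdeal I) :
    (∃ j, CanTogOut I (Fin.last n, j)) ↔ ∃ j, (Fin.last n, j) ∈ I := by
  simp [exists_canTogOut_row_iff hI, not_lt.2 (Fin.le_last _)]

lemma exists_canTogIn_zero_iff (hI : IsIdeal I) :
    (∃ j, CanTogIn I (0, j)) ↔ ∃ j, (0, j) ∉ I := by
  simp [exists_canTogIn_row_iff hI]

lemma sum_row_weighted_Tout_sub_Tin (hI : IsIdeal I) (w : ℕ → ℝ) :
    ∑ p : Fin (n + 1) × β, (w (p.1 + 1) * Tout p I - w p.1 * Tin p I)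
      = w (n + 1) * (if ∃ j, (Fin.last n, j) ∈ I then 1 else 0)
        - w 0 * (if ∃ j, (0, j) ∉ I then 1 else 0) := by
  simp only [Fintype.sum_prod_type, sum_sub_distrib, ← mul_sum, sum_Tout_row, sum_Tin_row]
  rw [Fin.sum_univ_castSucc, Fin.sum_univ_succ (fun i => w i * _)]
  simp only [exists_canTogOut_castSucc_iff_exists_canTogIn_succ hI, exists_canTogOut_last_iff hI,
    exists_canTogIn_zero_iff hI, Fin.val_castSucc, Fin.val_succ, Fin.val_last, Fin.val_zero]
  ring

end FinRows

lemma sum_col_weighted_Tout_sub_Tin {m : ℕ} {α : Type*} [LinearOrder α] [Fintype α]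
    {I : Finset (α × Fin (m + 1))} (hI : IsIdeal I) (w : ℕ → ℝ) :
    ∑ p : α × Fin (m + 1), (w (p.2 + 1) * Tout p I - w p.2 * Tin p I)
      = w (m + 1) * (if ∃ i, (i, Fin.last m) ∈ I then 1 else 0)
        - w 0 * (if ∃ i, (i, 0) ∉ I then 1 else 0) := by
  let e : α × Fin (m + 1) ≃o Fin (m + 1) × α := OrderIso.prodComm
  rw [Fintype.sum_equiv e.toEquiv _
    (fun q => w (q.1 + 1) * Tout q (I.map e.toEquiv.toEmbedding)
      - w q.1 * Tin q (I.map e.toEquiv.toEmbedding))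
    fun p => by simp only [OrderIso.coe_toEquiv, Tout_map_orderIso, Tin_map_orderIso]; rfl,
    sum_row_weighted_Tout_sub_Tin (hI.map_orderIso e) w]
  simp [e]

noncomputable def rectCoeff (a b : ℕ) (p : Fin a × Fin b) : ℝ :=
  ((b : ℝ) * p.1 + a * p.2 - a * b) / (a + b)

lemma exists_notMem_row_zero_iff {n m : ℕ} {I : Finset (Fin (n + 1) × Fin (m + 1))}
    (hI : IsIdeal I) : (∃ j, (0, j) ∉ I) ↔ ¬∃ i, (i, Fin.last m) ∈ I := by
  constructor
  · rintro ⟨j, hj⟩ ⟨i, hi⟩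
    exact hj (hI (Prod.mk_le_mk.2 ⟨Fin.zero_le i, Fin.le_last j⟩) hi)
  · exact fun h => ⟨Fin.last m, fun h0 => h ⟨0, h0⟩⟩

lemma sum_Tout_eq_add_sum_rectCoeff_mul_Tsgn {a b : ℕ} (ha : 0 < a) (hb : 0 < b)
    {I : Finset (Fin a × Fin b)} (hI : IsIdeal I) :
    ∑ p, Tout p I = a * b / (a + b) + ∑ p, rectCoeff a b p * Tsgn p I := by
  obtain ⟨n, rfl⟩ := Nat.exists_eq_add_one_of_ne_zero ha.ne'
  obtain ⟨m, rfl⟩ := Nat.exists_eq_add_one_of_ne_zero hb.ne'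
  have hrow := sum_row_weighted_Tout_sub_Tin hI (fun k => k)
  have hcol := sum_col_weighted_Tout_sub_Tin hI (fun k => k)
  have hcount := sum_row_weighted_Tout_sub_Tin hI (fun _ => 1)
  simp only [Nat.cast_zero, zero_mul, sub_zero] at hrow hcol
  simp only [exists_notMem_row_zero_iff hI] at hcount
  set A : ℝ := ((n + 1 : ℕ) : ℝ)
  set B : ℝ := ((m + 1 : ℕ) : ℝ)
  have hAB : A + B ≠ 0 := by positivity
  have hsplit : (∑ p, rectCoeff (n + 1) (m + 1) p * Tsgn p I) * (A + B)
      = (A + B) * ∑ p, Tout p I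
        - B * ∑ p : Fin (n + 1) × Fin (m + 1), ((p.1 + 1 : ℕ) * Tout p I - (p.1 : ℕ) * Tin p I)
        - A * ∑ p : Fin (n + 1) × Fin (m + 1), ((p.2 + 1 : ℕ) * Tout p I - (p.2 : ℕ) * Tin p I)
        + A * B * ∑ p : Fin (n + 1) × Fin (m + 1), (1 * Tout p I - 1 * Tin p I) := by
    simp only [sum_mul, mul_sum, ← sum_sub_distrib, ← sum_add_distrib]
    refine sum_congr rfl fun p _ => ?_
    simp only [rectCoeff, Tsgn, A, B]
    field_simp
    push_cast
    ring
  rw [hrow, hcol, hcount] at hsplit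
  field_simp
  split_ifs at hsplit <;> linarith

lemma card_filter_canTogOut_eq_sum_Tout (I : Finset P) :
    ((univ.filter fun p => CanTogOut I p).card : ℝ) = ∑ p, Tout p I := by
  simp only [Tout, sum_boole]

lemma isIdeal_rowmotion (I : Finset P) : IsIdeal (rowmotion I) := by
  intro x y hxy hy
  obtain ⟨z, hz, hyz⟩ := (mem_filter.1 hy).2
  exact mem_filter.2 ⟨mem_univ _, z, hz, hxy.trans hyz⟩

lemma IsIdeal.rowmotion_iterate {I : Finset P} (hI : IsIdeal I) :
    ∀ k, IsIdeal (rowmotion^[k] I)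
  | 0 => hI
  | k + 1 => by rw [Function.iterate_succ_apply']; exact isIdeal_rowmotion _

lemma canTogOut_rowmotion_iff (I : Finset P) (p : P) :
    CanTogOut (rowmotion I) p ↔ CanTogIn I p := by
  have hmem : ∀ {q}, CanTogIn I q → q ∈ rowmotion I := fun hq =>
    mem_filter.2 ⟨mem_univ _, _, hq, le_rfl⟩
  constructor
  · rintro ⟨hp, hmax⟩
    obtain ⟨y, hy, hpy⟩ := (mem_filter.1 hp).2
    obtain rfl | hlt := hpy.eq_or_lt
    · exact hy
    · exact absurd (hmem hy) (hmax y hlt)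
  · refine fun hp => ⟨hmem hp, fun q hpq hq => ?_⟩
    obtain ⟨y, hy, hqy⟩ := (mem_filter.1 hq).2
    exact hp.1 (hy.2 p (hpq.trans_le hqy))

lemma Tout_rowmotion (I : Finset P) (p : P) : Tout p (rowmotion I) = Tin p I := by
  simp only [Tout, Tin, canTogOut_rowmotion_iff]

lemma sum_range_Tsgn_rowmotion_iterate {I : Finset P} {N : ℕ} (hN : rowmotion^[N] I = I)
    (p : P) : ∑ k ∈ range N, Tsgn p (rowmotion^[k] I) = 0 := by
  have hstep : ∀ k, Tsgn p (rowmotion^[k] I)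
      = Tout p (rowmotion^[k + 1] I) - Tout p (rowmotion^[k] I) := fun k => by
    rw [Tsgn, Function.iterate_succ_apply', Tout_rowmotion]
  rw [sum_congr rfl fun k _ => hstep k,
    sum_range_sub (fun k => Tout p (rowmotion^[k] I)), hN, Function.iterate_zero_apply, sub_self]

lemma sum_range_sum_mul_Tsgn_rowmotion_iterate {I : Finset P} {N : ℕ}
    (hN : rowmotion^[N] I = I) (c : P → ℝ) :
    ∑ k ∈ range N, ∑ p, c p * Tsgn p (rowmotion^[k] I) = 0 := by
  rw [sum_comm]
  simp only [← mul_sum, sum_range_Tsgn_rowmotion_iterate hN, mul_zero, sum_const_zero]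

/-- On the rectangle `[a]×[b]`, the antichain cardinality statistic `I ↦ #max(I)` is
`ab/(a+b)` plus a linear combination of signed toggleability statistics; consequently
its average along every rowmotion orbit is `ab/(a+b)`. -/
theorem rect_antichain_card_homomesy (a b : ℕ) (ha : 0 < a) (hb : 0 < b) :
    ∃ c : Fin a × Fin b → ℝ,
      (∀ I : Finset (Fin a × Fin b), IsIdeal I →
        ((univ.filter fun p : Fin a × Fin b => CanTogOut I p).card : ℝ)
          = (a : ℝ) * b / ((a : ℝ) + b) + ∑ p : Fin a × Fin b, c p * Tsgn p I) ∧
      (∀ I : Finset (Fin a × Fin b), IsIdeal I → ∀ N : ℕ, 0 < N → rowmotion^[N] I = I →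
        ∑ k ∈ Finset.range N,
            ((univ.filter fun p : Fin a × Fin b => CanTogOut (rowmotion^[k] I) p).card : ℝ)
          = N * ((a : ℝ) * b / ((a : ℝ) + b))) := by
  have hcard : ∀ I : Finset (Fin a × Fin b), IsIdeal I →
      ((univ.filter fun p => CanTogOut I p).card : ℝ)
        = a * b / (a + b) + ∑ p, rectCoeff a b p * Tsgn p I := fun I hI => by
    rw [card_filter_canTogOut_eq_sum_Tout, sum_Tout_eq_add_sum_rectCoeff_mul_Tsgn ha hb hI]
  refine ⟨rectCoeff a b, hcard, fun I hI N _ hN => ?_⟩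
  simp only [hcard _ (hI.rowmotion_iterate _), sum_add_distrib,
    sum_range_sum_mul_Tsgn_rowmotion_iterate hN, sum_const, card_range, nsmul_eq_mul, add_zero]
end

section
/- Let P = [a]×[b] and fix k with 1−a ≤ k ≤ b−1. The file statistic I ↦ #{(i,j) ∈ I : j−i = k} equals c plus an ℝ-linear combination of the signed toggleability statistics T_p, where c = a(b−k)/(a+b) if k ≥ 0 and c = b(a+k)/(a+b) if k < 0. In particular, its average along any rowmotion orbit is c. -/
open scoped Classical
open Finset

variable {P : Type*} [Fintype P] [PartialOrder P]

set_option linter.unusedSectionVars false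

section Generic
variable {P : Type*} [Fintype P] [PartialOrder P] [DecidableEq P]

lemma erase_isIdeal {I : Finset P} (hI : IsIdeal I) {q : P}
    (hmax : ∀ r ∈ I, ¬ q < r) : IsIdeal (I.erase q) := by
  intro x y hxy hy
  rw [Finset.mem_erase] at hy ⊢
  refine ⟨?_, hI hxy hy.2⟩
  rintro rfl
  exact hmax y hy.2 (lt_of_le_of_ne hxy (Ne.symm hy.1))

lemma tsgn_diff {I : Finset P} (hI : IsIdeal I) {q : P} (hq : q ∈ I)
    (hmax : ∀ r ∈ I, ¬ q < r) (p : P) :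
    Tsgn p I - Tsgn p (I.erase q) =
      (if p = q then (-2 : ℝ) else 0)
      + (if q < p ∧ CanTogIn I p then 1 else 0)
      + (if p < q ∧ CanTogOut (I.erase q) p then 1 else 0) := by
  unfold Tsgn Tin Tout
  rcases eq_or_ne p q with rfl | hne
  · have h1 : ¬ CanTogIn I p := fun h => h.1 hq
    have h2 : CanTogIn (I.erase p) p :=
      ⟨fun h => (Finset.mem_erase.mp h).1 rfl,
       fun r hr => Finset.mem_erase.mpr ⟨ne_of_lt hr, hI hr.le hq⟩⟩
    have h3 : CanTogOut I p := ⟨hq, fun r hr hrI => hmax r hrI hr⟩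
    have h4 : ¬ CanTogOut (I.erase p) p := fun h => (Finset.mem_erase.mp h.1).1 rfl
    simp [h1, h2, h3, h4]; norm_num
  · by_cases hqp : q < p
    · have hpI : p ∉ I := fun h => hmax p h hqp
      have h2 : ¬ CanTogIn (I.erase q) p := fun h =>
        (Finset.mem_erase.mp (h.2 q hqp)).1 rfl
      have h3 : ¬ CanTogOut I p := fun h => hpI h.1
      have h4 : ¬ CanTogOut (I.erase q) p := fun h => hpI (Finset.mem_erase.mp h.1).2
      have h5 : ¬ p < q := fun h => absurd hqp (asymm h)
      simp [h2, h3, h4, h5, hne, hqp]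
    · by_cases hpq : p < q
      · have hpI : p ∈ I := hI hpq.le hq
        have h1 : ¬ CanTogIn I p := fun h => h.1 hpI
        have h2 : ¬ CanTogIn (I.erase q) p := fun h =>
          h.1 (Finset.mem_erase.mpr ⟨hne, hpI⟩)
        have h3 : ¬ CanTogOut I p := fun h => h.2 q hpq hq
        by_cases h4 : CanTogOut (I.erase q) p <;>
          simp [h1, h2, h3, h4, hne, hqp, hpq]
      · -- incomparable
        have hIn : CanTogIn I p ↔ CanTogIn (I.erase q) p := by
          unfold CanTogIn
          constructor
          · rintro ⟨h1, h2⟩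
            exact ⟨fun h => h1 (Finset.mem_erase.mp h).2,
              fun r hr => Finset.mem_erase.mpr ⟨fun he => hqp (he ▸ hr), h2 r hr⟩⟩
          · rintro ⟨h1, h2⟩
            refine ⟨fun h => h1 (Finset.mem_erase.mpr ⟨hne, h⟩),
              fun r hr => (Finset.mem_erase.mp (h2 r hr)).2⟩
        have hOut : CanTogOut I p ↔ CanTogOut (I.erase q) p := by
          unfold CanTogOut
          constructor
          · rintro ⟨h1, h2⟩
            exact ⟨Finset.mem_erase.mpr ⟨hne, h1⟩,
              fun r hr h => h2 r hr (Finset.mem_erase.mp h).2⟩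
          · rintro ⟨h1, h2⟩
            refine ⟨(Finset.mem_erase.mp h1).2, fun r hr h => ?_⟩
            exact h2 r hr (Finset.mem_erase.mpr ⟨fun he => hpq (he ▸ hr), h⟩)
        simp [hIn, hOut, hne, hqp, hpq]

lemma canTogOut_rowmotion (J : Finset P) (p : P) :
    CanTogOut (rowmotion J) p ↔ CanTogIn J p := by
  unfold CanTogOut rowmotion
  constructor
  · rintro ⟨h1, h2⟩
    rw [Finset.mem_filter] at h1
    obtain ⟨-, y, hy, hpy⟩ := h1
    rcases eq_or_lt_of_le hpy with rfl | hlt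
    · exact hy
    · exact absurd (Finset.mem_filter.mpr ⟨Finset.mem_univ _, y, hy, le_refl y⟩)
        (h2 y hlt)
  · intro h
    refine ⟨Finset.mem_filter.mpr ⟨Finset.mem_univ _, p, h, le_refl p⟩, fun r hr hc => ?_⟩
    rw [Finset.mem_filter] at hc
    obtain ⟨-, y, hy, hry⟩ := hc
    exact h.1 (hy.2 p (lt_of_lt_of_le hr hry))

lemma rowmotion_isIdeal (J : Finset P) : IsIdeal (rowmotion J) := by
  intro x y hxy hy
  rw [rowmotion, Finset.mem_filter] at hy ⊢
  obtain ⟨-, z, hz, hyz⟩ := hy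
  exact ⟨Finset.mem_univ _, z, hz, hxy.trans hyz⟩

end Generic

set_option linter.unusedSectionVars false
set_option maxHeartbeats 1000000

section Rect
variable {a b : ℕ}

lemma peq_iff (p q : Fin a × Fin b) :
    p = q ↔ p.1.val = q.1.val ∧ p.2.val = q.2.val := by
  rw [Prod.ext_iff, Fin.ext_iff, Fin.ext_iff]

lemma ple_iff (p q : Fin a × Fin b) :
    p ≤ q ↔ p.1.val ≤ q.1.val ∧ p.2.val ≤ q.2.val := by
  rw [Prod.le_def, Fin.le_def, Fin.le_def]

lemma plt_iff (p q : Fin a × Fin b) :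
    p < q ↔ p.1.val ≤ q.1.val ∧ p.2.val ≤ q.2.val ∧
      ¬(p.1.val = q.1.val ∧ p.2.val = q.2.val) := by
  rw [lt_iff_le_and_ne, ple_iff, ne_eq, peq_iff]
  tauto

lemma L1 {I : Finset (Fin a × Fin b)} {q p : Fin a × Fin b}
    (hmax : ∀ r ∈ I, ¬ q < r) (hqp : q < p) (h : ∀ r, r < p → r ∈ I) :
    (p.1.val = q.1.val ∧ p.2.val = q.2.val + 1) ∨
    (p.1.val = q.1.val + 1 ∧ p.2.val = q.2.val) := by
  by_contra hcon
  push_neg at hcon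
  rw [plt_iff] at hqp
  have hu : p.1.val < a := p.1.isLt
  have hv : p.2.val < b := p.2.isLt
  -- find r strictly between q and p
  have : ∃ x y : ℕ, x < a ∧ y < b ∧ q.1.val ≤ x ∧ q.2.val ≤ y ∧
      ¬(x = q.1.val ∧ y = q.2.val) ∧ x ≤ p.1.val ∧ y ≤ p.2.val ∧
      ¬(x = p.1.val ∧ y = p.2.val) := by
    by_cases h1 : p.1.val = q.1.val
    · exact ⟨q.1.val, q.2.val + 1, by omega, by omega, by omega, by omega,
        by omega, by omega, by omega, by omega⟩
    · by_cases h2 : p.2.val = q.2.val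
      · exact ⟨q.1.val + 1, q.2.val, by omega, by omega, by omega, by omega,
          by omega, by omega, by omega, by omega⟩
      · exact ⟨p.1.val, q.2.val, by omega, by omega, by omega, by omega,
          by omega, by omega, by omega, by omega⟩
  obtain ⟨x, y, hx, hy, h3, h4, h5, h6, h7, h8⟩ := this
  set r : Fin a × Fin b := (⟨x, hx⟩, ⟨y, hy⟩) with hr
  have hrp : r < p := by rw [plt_iff]; exact ⟨h6, h7, h8⟩
  have hqr : q < r := by rw [plt_iff]; simp only [hr]; omega
  exact hmax r (h r hrp) hqr

lemma L2 {I : Finset (Fin a × Fin b)} {q p : Fin a × Fin b} (hI : IsIdeal I)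
    (hq : q ∈ I) (hpq : p < q) (h : ∀ r, p < r → r ∉ I.erase q) :
    (p.1.val = q.1.val ∧ p.2.val + 1 = q.2.val) ∨
    (p.1.val + 1 = q.1.val ∧ p.2.val = q.2.val) := by
  by_contra hcon
  push_neg at hcon
  rw [plt_iff] at hpq
  have hi : q.1.val < a := q.1.isLt
  have hj : q.2.val < b := q.2.isLt
  have : ∃ x y : ℕ, x < a ∧ y < b ∧ p.1.val ≤ x ∧ p.2.val ≤ y ∧
      ¬(x = p.1.val ∧ y = p.2.val) ∧ x ≤ q.1.val ∧ y ≤ q.2.val ∧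
      ¬(x = q.1.val ∧ y = q.2.val) := by
    by_cases h1 : p.1.val = q.1.val
    · exact ⟨q.1.val, p.2.val + 1, by omega, by omega, by omega, by omega,
        by omega, by omega, by omega, by omega⟩
    · by_cases h2 : p.2.val = q.2.val
      · exact ⟨p.1.val + 1, q.2.val, by omega, by omega, by omega, by omega,
          by omega, by omega, by omega, by omega⟩
      · exact ⟨p.1.val, q.2.val, by omega, by omega, by omega, by omega,
          by omega, by omega, by omega, by omega⟩
  obtain ⟨x, y, hx, hy, h3, h4, h5, h6, h7, h8⟩ := this
  set r : Fin a × Fin b := (⟨x, hx⟩, ⟨y, hy⟩) with hr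
  have hpr : p < r := by rw [plt_iff]; exact ⟨h3, h4, by simp only [hr]; omega⟩
  have hrq : r < q := by rw [plt_iff]; exact ⟨h6, h7, by simp only [hr]; omega⟩
  exact h r hpr (Finset.mem_erase.mpr ⟨ne_of_lt hrq, hI hrq.le hq⟩)

end Rect

def fil {a b : ℕ} (p : Fin a × Fin b) : ℤ := (p.2.val : ℤ) - (p.1.val : ℤ)

def X2 {a b : ℕ} (I : Finset (Fin a × Fin b)) (q : Fin a × Fin b) : Prop :=
  ∃ r : Fin a × Fin b, r.1.val + 1 = q.1.val ∧ r.2.val = q.2.val + 1 ∧ r ∈ I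

def X1 {a b : ℕ} (I : Finset (Fin a × Fin b)) (q : Fin a × Fin b) : Prop :=
  ∃ r : Fin a × Fin b, r.1.val = q.1.val + 1 ∧ r.2.val + 1 = q.2.val ∧ r ∈ I

section CardLemmas
variable {a b : ℕ} {I : Finset (Fin a × Fin b)} {q : Fin a × Fin b}

lemma cardA2 (hI : IsIdeal I) (hq : q ∈ I) (hmax : ∀ r ∈ I, ¬ q < r) :
    (univ.filter fun p => (q < p ∧ CanTogIn I p) ∧ fil p = fil q + 1).card
      = if q.2.val + 1 < b ∧ (q.1.val = 0 ∨ X2 I q) then 1 else 0 := by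
  by_cases hcond : q.2.val + 1 < b ∧ (q.1.val = 0 ∨ X2 I q)
  · rw [if_pos hcond]
    obtain ⟨h1, h2⟩ := hcond
    set s2 : Fin a × Fin b := (q.1, ⟨q.2.val + 1, h1⟩) with hs2
    rw [Finset.card_eq_one]
    refine ⟨s2, ?_⟩
    ext p
    simp only [Finset.mem_filter, Finset.mem_univ, true_and, Finset.mem_singleton]
    constructor
    · rintro ⟨⟨hqp, hct⟩, hf⟩
      rcases L1 hmax hqp hct.2 with hs | hs
      · rw [peq_iff]; simp only [hs2]; omega
      · exfalso; unfold fil at hf; omega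
    · rintro rfl
      have hqs : q < s2 := by rw [plt_iff]; simp only [hs2]; omega
      refine ⟨⟨hqs, fun hmem => hmax s2 hmem hqs, ?_⟩, by unfold fil; simp only [hs2]; omega⟩
      intro r hr
      rw [plt_iff] at hr
      simp only [hs2] at hr
      by_cases hr2 : r.2.val ≤ q.2.val
      · exact hI (show r ≤ q by rw [ple_iff]; omega) hq
      · rcases h2 with h0 | ⟨x, hx1, hx2, hxI⟩
        · exact absurd rfl (by omega : ¬ (0:ℕ) = 0)
        · exact hI (show r ≤ x by rw [ple_iff]; omega) hxI
  · rw [if_neg hcond, Finset.card_eq_zero, Finset.filter_eq_empty_iff]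
    push_neg at hcond
    rintro p -
    rintro ⟨⟨hqp, hct⟩, hf⟩
    rcases L1 hmax hqp hct.2 with hs | hs
    swap
    · unfold fil at hf; omega
    have hb2 : q.2.val + 1 < b := by have := p.2.isLt; omega
    obtain ⟨hi0, hX⟩ := hcond hb2
    have hi : q.1.val - 1 < a := by have := q.1.isLt; omega
    set x : Fin a × Fin b := (⟨q.1.val - 1, hi⟩, ⟨q.2.val + 1, hb2⟩) with hx
    have hxp : x < p := by rw [plt_iff]; simp only [hx]; omega
    exact hX ⟨x, by simp only [hx]; omega, by simp only [hx], hct.2 x hxp⟩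

lemma cardB2 (hI : IsIdeal I) (hq : q ∈ I) (hmax : ∀ r ∈ I, ¬ q < r) :
    (univ.filter fun p => (p < q ∧ CanTogOut (I.erase q) p) ∧ fil p = fil q + 1).card
      = if 0 < q.1.val ∧ ¬ X2 I q then 1 else 0 := by
  by_cases hcond : 0 < q.1.val ∧ ¬ X2 I q
  · rw [if_pos hcond]
    obtain ⟨h1, h2⟩ := hcond
    have hi : q.1.val - 1 < a := by have := q.1.isLt; omega
    set r1 : Fin a × Fin b := (⟨q.1.val - 1, hi⟩, q.2) with hr1
    rw [Finset.card_eq_one]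
    refine ⟨r1, ?_⟩
    ext p
    simp only [Finset.mem_filter, Finset.mem_univ, true_and, Finset.mem_singleton]
    constructor
    · rintro ⟨⟨hpq, hct⟩, hf⟩
      rcases L2 hI hq hpq hct.2 with hs | hs
      · exfalso; unfold fil at hf; omega
      · rw [peq_iff]; simp only [hr1]; omega
    · rintro rfl
      have hrq : r1 < q := by rw [plt_iff]; simp only [hr1]; omega
      refine ⟨⟨hrq, Finset.mem_erase.mpr ⟨ne_of_lt hrq, hI hrq.le hq⟩, ?_⟩,
        by unfold fil; simp only [hr1]; omega⟩
      intro r hr hmem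
      rw [Finset.mem_erase] at hmem
      rw [plt_iff] at hr
      simp only [hr1] at hr
      by_cases hcase : q.1.val ≤ r.1.val
      · have : q < r := by
          rw [plt_iff]
          refine ⟨hcase, by omega, ?_⟩
          intro hh
          exact hmem.1 (by rw [peq_iff]; omega)
        exact hmax r hmem.2 this
      · -- r.1.val = q.1.val - 1, r.2.val > q.2.val
        have hb2 : q.2.val + 1 < b ∨ q.2.val + 1 = b := by have := r.2.isLt; omega
        have hb2' : q.2.val + 1 < b := by have := r.2.isLt; omega
        set x : Fin a × Fin b := (⟨q.1.val - 1, hi⟩, ⟨q.2.val + 1, hb2'⟩) with hx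
        exact h2 ⟨x, by simp only [hx]; omega, by simp only [hx],
          hI (show x ≤ r by rw [ple_iff]; simp only [hx]; omega) hmem.2⟩
  · rw [if_neg hcond, Finset.card_eq_zero, Finset.filter_eq_empty_iff]
    push_neg at hcond
    rintro p - ⟨⟨hpq, hct⟩, hf⟩
    rcases L2 hI hq hpq hct.2 with hs | hs
    · unfold fil at hf; omega
    obtain ⟨x, hx1, hx2, hxI⟩ := hcond (by omega)
    have hpx : p < x := by rw [plt_iff]; omega
    exact hct.2 x hpx (Finset.mem_erase.mpr ⟨by simp only [ne_eq, peq_iff]; omega, hxI⟩)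

lemma cardA1 (hI : IsIdeal I) (hq : q ∈ I) (hmax : ∀ r ∈ I, ¬ q < r) :
    (univ.filter fun p => (q < p ∧ CanTogIn I p) ∧ fil p = fil q - 1).card
      = if q.1.val + 1 < a ∧ (q.2.val = 0 ∨ X1 I q) then 1 else 0 := by
  by_cases hcond : q.1.val + 1 < a ∧ (q.2.val = 0 ∨ X1 I q)
  · rw [if_pos hcond]
    obtain ⟨h1, h2⟩ := hcond
    set s1 : Fin a × Fin b := (⟨q.1.val + 1, h1⟩, q.2) with hs1
    rw [Finset.card_eq_one]
    refine ⟨s1, ?_⟩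
    ext p
    simp only [Finset.mem_filter, Finset.mem_univ, true_and, Finset.mem_singleton]
    constructor
    · rintro ⟨⟨hqp, hct⟩, hf⟩
      rcases L1 hmax hqp hct.2 with hs | hs
      · exfalso; unfold fil at hf; omega
      · rw [peq_iff]; simp only [hs1]; omega
    · rintro rfl
      have hqs : q < s1 := by rw [plt_iff]; simp only [hs1]; omega
      refine ⟨⟨hqs, fun hmem => hmax s1 hmem hqs, ?_⟩,
        by unfold fil; simp only [hs1]; omega⟩
      intro r hr
      rw [plt_iff] at hr
      simp only [hs1] at hr
      by_cases hr2 : r.1.val ≤ q.1.val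
      · exact hI (show r ≤ q by rw [ple_iff]; omega) hq
      · rcases h2 with h0 | ⟨x, hx1, hx2, hxI⟩
        · exact absurd rfl (by omega : ¬ (0:ℕ) = 0)
        · exact hI (show r ≤ x by rw [ple_iff]; omega) hxI
  · rw [if_neg hcond, Finset.card_eq_zero, Finset.filter_eq_empty_iff]
    push_neg at hcond
    rintro p - ⟨⟨hqp, hct⟩, hf⟩
    rcases L1 hmax hqp hct.2 with hs | hs
    · unfold fil at hf; omega
    have ha2 : q.1.val + 1 < a := by have := p.1.isLt; omega
    obtain ⟨hj0, hX⟩ := hcond ha2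
    have hj : q.2.val - 1 < b := by have := q.2.isLt; omega
    set x : Fin a × Fin b := (⟨q.1.val + 1, ha2⟩, ⟨q.2.val - 1, hj⟩) with hx
    have hxp : x < p := by rw [plt_iff]; simp only [hx]; omega
    exact hX ⟨x, by simp only [hx], by simp only [hx]; omega, hct.2 x hxp⟩

lemma cardB1 (hI : IsIdeal I) (hq : q ∈ I) (hmax : ∀ r ∈ I, ¬ q < r) :
    (univ.filter fun p => (p < q ∧ CanTogOut (I.erase q) p) ∧ fil p = fil q - 1).card
      = if 0 < q.2.val ∧ ¬ X1 I q then 1 else 0 := by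
  by_cases hcond : 0 < q.2.val ∧ ¬ X1 I q
  · rw [if_pos hcond]
    obtain ⟨h1, h2⟩ := hcond
    have hj : q.2.val - 1 < b := by have := q.2.isLt; omega
    set r2 : Fin a × Fin b := (q.1, ⟨q.2.val - 1, hj⟩) with hr2
    rw [Finset.card_eq_one]
    refine ⟨r2, ?_⟩
    ext p
    simp only [Finset.mem_filter, Finset.mem_univ, true_and, Finset.mem_singleton]
    constructor
    · rintro ⟨⟨hpq, hct⟩, hf⟩
      rcases L2 hI hq hpq hct.2 with hs | hs
      · rw [peq_iff]; simp only [hr2]; omega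
      · exfalso; unfold fil at hf; omega
    · rintro rfl
      have hrq : r2 < q := by rw [plt_iff]; simp only [hr2]; omega
      refine ⟨⟨hrq, Finset.mem_erase.mpr ⟨ne_of_lt hrq, hI hrq.le hq⟩, ?_⟩,
        by unfold fil; simp only [hr2]; omega⟩
      intro r hr hmem
      rw [Finset.mem_erase] at hmem
      rw [plt_iff] at hr
      simp only [hr2] at hr
      by_cases hcase : q.2.val ≤ r.2.val
      · have : q < r := by
          rw [plt_iff]
          refine ⟨by omega, hcase, ?_⟩
          intro hh
          exact hmem.1 (by rw [peq_iff]; omega)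
        exact hmax r hmem.2 this
      · have ha2' : q.1.val + 1 < a := by have := r.1.isLt; omega
        set x : Fin a × Fin b := (⟨q.1.val + 1, ha2'⟩, ⟨q.2.val - 1, hj⟩) with hx
        exact h2 ⟨x, by simp only [hx], by simp only [hx]; omega,
          hI (show x ≤ r by rw [ple_iff]; simp only [hx]; omega) hmem.2⟩
  · rw [if_neg hcond, Finset.card_eq_zero, Finset.filter_eq_empty_iff]
    push_neg at hcond
    rintro p - ⟨⟨hpq, hct⟩, hf⟩
    rcases L2 hI hq hpq hct.2 with hs | hs
    swap
    · unfold fil at hf; omega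
    obtain ⟨x, hx1, hx2, hxI⟩ := hcond (by omega)
    have hpx : p < x := by rw [plt_iff]; omega
    exact hct.2 x hpx (Finset.mem_erase.mpr ⟨by simp only [ne_eq, peq_iff]; omega, hxI⟩)

end CardLemmas

noncomputable def gam (a b : ℕ) (k : ℤ) (f : ℤ) : ℝ :=
  -((((b:ℤ) - max f k : ℤ) : ℝ) * (((min f k + (a:ℤ) : ℤ)) : ℝ)) / ((a:ℝ) + b)

lemma gam_lap (a b : ℕ) (ha : 0 < a) (hb : 0 < b) (k f : ℤ) :
    gam a b k (f+1) + gam a b k (f-1) - 2 * gam a b k f = if f = k then 1 else 0 := by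
  have hab : (a:ℝ) + b ≠ 0 := by positivity
  unfold gam
  rcases lt_trichotomy f k with h | rfl | h
  · rw [if_neg (by omega)]
    rw [max_eq_right (by omega), max_eq_right (by omega), max_eq_right (by omega),
      min_eq_left (by omega), min_eq_left (by omega), min_eq_left (by omega)]
    push_cast
    field_simp
    ring
  · rw [if_pos rfl]
    rw [max_eq_left (by omega), max_eq_right (by omega), max_eq_left (by omega),
      min_eq_right (by omega), min_eq_left (by omega), min_eq_left (by omega)]
    push_cast
    field_simp
    ring
  · rw [if_neg (by omega)]
    rw [max_eq_left (by omega), max_eq_left (by omega), max_eq_left (by omega),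
      min_eq_right (by omega), min_eq_right (by omega), min_eq_right (by omega)]
    push_cast
    field_simp
    ring

lemma gam_top (a b : ℕ) (k : ℤ) (hk : k ≤ (b:ℤ)) : gam a b k b = 0 := by
  unfold gam; rw [max_eq_left hk]; simp

lemma gam_bot (a b : ℕ) (k : ℤ) (hk : -(a:ℤ) ≤ k) : gam a b k (-(a:ℤ)) = 0 := by
  unfold gam; rw [min_eq_left hk]; push_cast; ring

noncomputable def cc (a b : ℕ) (k : ℤ) (p : Fin a × Fin b) : ℝ := gam a b k (fil p)

lemma main_ideal (a b : ℕ) (ha : 0 < a) (hb : 0 < b) (k : ℤ)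
    (hk1 : 1 - (a:ℤ) ≤ k) (hk2 : k ≤ (b:ℤ) - 1) :
    ∀ (n : ℕ) (I : Finset (Fin a × Fin b)), I.card = n → IsIdeal I →
      ((I.filter fun p => fil p = k).card : ℝ)
        = - gam a b k 0 + ∑ p, cc a b k p * Tsgn p I := by
  intro n
  induction n using Nat.strong_induction_on with
  | _ n ih =>
    intro I hcard hI
    rcases Finset.eq_empty_or_nonempty I with rfl | hne
    · -- base case : I = ∅
      have hbot : ∀ p : Fin a × Fin b, CanTogIn (∅ : Finset (Fin a × Fin b)) p ↔
          p = (⟨0, ha⟩, ⟨0, hb⟩) := by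
        intro p
        constructor
        · rintro ⟨-, h2⟩
          by_contra hne
          have : (⟨0, ha⟩, ⟨0, hb⟩) < p := by
            rw [plt_iff]
            rw [peq_iff] at hne
            simp only at hne ⊢
            omega
          simpa using h2 _ this
        · rintro rfl
          refine ⟨by simp, fun r hr => ?_⟩
          rw [plt_iff] at hr
          simp only at hr
          omega
      have hsum : ∀ p : Fin a × Fin b, cc a b k p * Tsgn p (∅ : Finset (Fin a × Fin b))
          = if p = (⟨0, ha⟩, ⟨0, hb⟩) then cc a b k ((⟨0, ha⟩, ⟨0, hb⟩) : Fin a × Fin b) else 0 := by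
        intro p
        unfold Tsgn Tin Tout
        have hout : ¬ CanTogOut (∅ : Finset (Fin a × Fin b)) p := by
          rintro ⟨h, -⟩; simp at h
        rcases eq_or_ne p (⟨0, ha⟩, ⟨0, hb⟩) with rfl | hne
        · rw [if_pos ((hbot _).mpr rfl), if_neg hout, if_pos rfl]
          ring
        · rw [if_neg (fun h => hne ((hbot p).mp h)), if_neg hout, if_neg hne]
          ring
      rw [Finset.sum_congr rfl (fun p _ => hsum p), Finset.sum_ite_eq' Finset.univ]
      simp only [Finset.mem_univ, if_true, Finset.filter_empty, Finset.card_empty,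
        Nat.cast_zero]
      have hf0 : fil ((⟨0, ha⟩, ⟨0, hb⟩) : Fin a × Fin b) = 0 := by unfold fil; simp
      unfold cc
      rw [hf0]
      ring
    · -- inductive step
      obtain ⟨q, hqI, hqmax⟩ : ∃ q ∈ I, ∀ r ∈ I, ¬ q < r := by
        obtain ⟨q, hq⟩ := Finset.exists_maximal hne
        exact ⟨q, hq.1, fun r hr hlt => lt_irrefl q (lt_of_lt_of_le hlt (hq.2 hr hlt.le))⟩
      have hI' : IsIdeal (I.erase q) := erase_isIdeal hI hqmax
      have hclt : (I.erase q).card < n := by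
        rw [← hcard]
        exact Finset.card_erase_lt_of_mem hqI
      have hrec := ih (I.erase q).card hclt (I.erase q) rfl hI'
      have hcount : ((I.filter fun p => fil p = k).card : ℝ)
          = (((I.erase q).filter fun p => fil p = k).card : ℝ)
            + (if fil q = k then 1 else 0) := by
        rw [Finset.filter_erase]
        by_cases hfq : fil q = k
        · rw [if_pos hfq]
          have hqmem : q ∈ I.filter fun p => fil p = k := Finset.mem_filter.mpr ⟨hqI, hfq⟩
          have hpos : 1 ≤ (I.filter fun p => fil p = k).card :=
            Finset.card_pos.mpr ⟨q, hqmem⟩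
          rw [Finset.card_erase_of_mem hqmem, Nat.cast_sub hpos]
          push_cast
          ring
        · rw [if_neg hfq]
          have : q ∉ I.filter fun p => fil p = k :=
            fun h => hfq (Finset.mem_filter.mp h).2
          rw [Finset.erase_eq_of_notMem this, add_zero]
      have hdiff : ∑ p, cc a b k p * Tsgn p I - ∑ p, cc a b k p * Tsgn p (I.erase q)
          = if fil q = k then 1 else 0 := by
        rw [← Finset.sum_sub_distrib]
        have hexp : ∀ p : Fin a × Fin b,
            cc a b k p * Tsgn p I - cc a b k p * Tsgn p (I.erase q)
            = (if p = q then -2 * cc a b k q else 0)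
              + ((if (q < p ∧ CanTogIn I p) ∧ fil p = fil q + 1
                    then gam a b k (fil q + 1) else 0)
                + (if (q < p ∧ CanTogIn I p) ∧ fil p = fil q - 1
                    then gam a b k (fil q - 1) else 0))
              + ((if (p < q ∧ CanTogOut (I.erase q) p) ∧ fil p = fil q + 1
                    then gam a b k (fil q + 1) else 0)
                + (if (p < q ∧ CanTogOut (I.erase q) p) ∧ fil p = fil q - 1
                    then gam a b k (fil q - 1) else 0)) := by
          intro p
          rw [← mul_sub, tsgn_diff hI hqI hqmax p]
          have hcc : ∀ g : ℤ, fil p = g → cc a b k p = gam a b k g := by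
            rintro g rfl; rfl
          by_cases hpq : p = q
          · subst hpq
            have h1 : ¬ (p < p ∧ CanTogIn I p) := fun h => lt_irrefl p h.1
            have h2 : ¬ (p < p ∧ CanTogOut (I.erase p) p) := fun h => lt_irrefl p h.1
            have h3 : ¬ ((p < p ∧ CanTogIn I p) ∧ fil p = fil p + 1) := fun h => h1 h.1
            have h4 : ¬ ((p < p ∧ CanTogIn I p) ∧ fil p = fil p - 1) := fun h => h1 h.1
            have h5 : ¬ ((p < p ∧ CanTogOut (I.erase p) p) ∧ fil p = fil p + 1) :=
              fun h => h2 h.1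
            have h6 : ¬ ((p < p ∧ CanTogOut (I.erase p) p) ∧ fil p = fil p - 1) :=
              fun h => h2 h.1
            simp only [if_pos (rfl : p = p), if_neg h1, if_neg h2, if_neg h3, if_neg h4,
              if_neg h5, if_neg h6]
            simp
            ring
          · rw [if_neg hpq]
            by_cases hA' : q < p ∧ CanTogIn I p
            · have e1 : ¬ (p < q ∧ CanTogOut (I.erase q) p) := fun h =>
                absurd hA'.1 (asymm h.1)
              have e4 : ¬ ((p < q ∧ CanTogOut (I.erase q) p) ∧ fil p = fil q + 1) :=
                fun h => e1 h.1
              have e5 : ¬ ((p < q ∧ CanTogOut (I.erase q) p) ∧ fil p = fil q - 1) :=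
                fun h => e1 h.1
              rcases L1 hqmax hA'.1 hA'.2.2 with hs | hs
              · have hf : fil p = fil q + 1 := by unfold fil; omega
                have e2 : (q < p ∧ CanTogIn I p) ∧ fil p = fil q + 1 := ⟨hA', hf⟩
                have e3 : ¬ ((q < p ∧ CanTogIn I p) ∧ fil p = fil q - 1) :=
                  fun h => absurd h.2 (by omega)
                rw [if_pos hA', if_neg e1, if_pos e2, if_neg e3, if_neg e4, if_neg e5,
                  hcc _ hf, if_neg hpq]
                ring
              · have hf : fil p = fil q - 1 := by unfold fil; omega
                have e2 : (q < p ∧ CanTogIn I p) ∧ fil p = fil q - 1 := ⟨hA', hf⟩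
                have e3 : ¬ ((q < p ∧ CanTogIn I p) ∧ fil p = fil q + 1) :=
                  fun h => absurd h.2 (by omega)
                rw [if_pos hA', if_neg e1, if_neg e3, if_pos e2, if_neg e4, if_neg e5,
                  hcc _ hf, if_neg hpq]
                ring
            · have e3 : ¬ ((q < p ∧ CanTogIn I p) ∧ fil p = fil q + 1) :=
                fun h => hA' h.1
              have e4 : ¬ ((q < p ∧ CanTogIn I p) ∧ fil p = fil q - 1) :=
                fun h => hA' h.1
              by_cases hB' : p < q ∧ CanTogOut (I.erase q) p
              · rcases L2 hI hqI hB'.1 hB'.2.2 with hs | hs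
                · have hf : fil p = fil q - 1 := by unfold fil; omega
                  have e2 : (p < q ∧ CanTogOut (I.erase q) p) ∧ fil p = fil q - 1 :=
                    ⟨hB', hf⟩
                  have e5 : ¬ ((p < q ∧ CanTogOut (I.erase q) p) ∧ fil p = fil q + 1) :=
                    fun h => absurd h.2 (by omega)
                  rw [if_neg hA', if_pos hB', if_neg e3, if_neg e4, if_neg e5, if_pos e2,
                    hcc _ hf, if_neg hpq]
                  ring
                · have hf : fil p = fil q + 1 := by unfold fil; omega
                  have e2 : (p < q ∧ CanTogOut (I.erase q) p) ∧ fil p = fil q + 1 :=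
                    ⟨hB', hf⟩
                  have e5 : ¬ ((p < q ∧ CanTogOut (I.erase q) p) ∧ fil p = fil q - 1) :=
                    fun h => absurd h.2 (by omega)
                  rw [if_neg hA', if_pos hB', if_neg e3, if_neg e4, if_pos e2, if_neg e5,
                    hcc _ hf, if_neg hpq]
                  ring
              · have e5 : ¬ ((p < q ∧ CanTogOut (I.erase q) p) ∧ fil p = fil q + 1) :=
                  fun h => hB' h.1
                have e6 : ¬ ((p < q ∧ CanTogOut (I.erase q) p) ∧ fil p = fil q - 1) :=
                  fun h => hB' h.1
                rw [if_neg hA', if_neg hB', if_neg e3, if_neg e4, if_neg e5, if_neg e6,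
                  if_neg hpq]
                ring
        rw [Finset.sum_congr rfl (fun p _ => hexp p)]
        rw [Finset.sum_add_distrib, Finset.sum_add_distrib, Finset.sum_add_distrib,
          Finset.sum_add_distrib]
        rw [Finset.sum_ite_eq' Finset.univ]
        simp only [Finset.mem_univ, if_true]
        have hconv : ∀ (Pr : Fin a × Fin b → Prop) (inst : DecidablePred Pr) (C : ℝ),
            (∑ p, if Pr p then C else 0)
              = (((Finset.univ.filter Pr).card : ℕ) : ℝ) * C := by
          intro Pr inst C
          rw [← Finset.sum_filter, Finset.sum_const, nsmul_eq_mul]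
        simp only [hconv]
        rw [cardA2 hI hqI hqmax, cardB2 hI hqI hqmax, cardA1 hI hqI hqmax,
          cardB1 hI hqI hqmax]
        have h2sum : (((if q.2.val + 1 < b ∧ (q.1.val = 0 ∨ X2 I q) then 1 else 0 : ℕ) : ℝ))
              * gam a b k (fil q + 1)
            + (((if 0 < q.1.val ∧ ¬ X2 I q then 1 else 0 : ℕ) : ℝ))
              * gam a b k (fil q + 1)
            = gam a b k (fil q + 1) := by
          by_cases hA : q.2.val + 1 < b ∧ (q.1.val = 0 ∨ X2 I q) <;>
            by_cases hB : 0 < q.1.val ∧ ¬ X2 I q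
          · exfalso
            rcases hA.2 with h | h
            · omega
            · exact hB.2 h
          · rw [if_pos hA, if_neg hB]
            simp
          · rw [if_neg hA, if_pos hB]
            simp
          · rw [if_neg hA, if_neg hB]
            push_neg at hA hB
            have hX2 : ¬ X2 I q := by
              intro hX
              obtain ⟨r, hr1, hr2, hrI⟩ := hX
              have hb2 : q.2.val + 1 < b := by have := r.2.isLt; omega
              exact (hA hb2).2 ⟨r, hr1, hr2, hrI⟩
            have hi0 : q.1.val = 0 := by
              by_contra h
              exact hX2 (hB (by omega))
            have hjb : q.2.val + 1 = b := by
              by_contra h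
              have hb2 : q.2.val + 1 < b := by have := q.2.isLt; omega
              exact (hA hb2).1 hi0
            have hftop : fil q + 1 = (b : ℤ) := by unfold fil; omega
            rw [hftop, gam_top a b k (by omega)]
            simp
        have h1sum : (((if q.1.val + 1 < a ∧ (q.2.val = 0 ∨ X1 I q) then 1 else 0 : ℕ) : ℝ))
              * gam a b k (fil q - 1)
            + (((if 0 < q.2.val ∧ ¬ X1 I q then 1 else 0 : ℕ) : ℝ))
              * gam a b k (fil q - 1)
            = gam a b k (fil q - 1) := by
          by_cases hA : q.1.val + 1 < a ∧ (q.2.val = 0 ∨ X1 I q) <;>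
            by_cases hB : 0 < q.2.val ∧ ¬ X1 I q
          · exfalso
            rcases hA.2 with h | h
            · omega
            · exact hB.2 h
          · rw [if_pos hA, if_neg hB]
            simp
          · rw [if_neg hA, if_pos hB]
            simp
          · rw [if_neg hA, if_neg hB]
            push_neg at hA hB
            have hX1 : ¬ X1 I q := by
              intro hX
              obtain ⟨r, hr1, hr2, hrI⟩ := hX
              have ha2 : q.1.val + 1 < a := by have := r.1.isLt; omega
              exact (hA ha2).2 ⟨r, hr1, hr2, hrI⟩
            have hj0 : q.2.val = 0 := by
              by_contra h
              exact hX1 (hB (by omega))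
            have hia : q.1.val + 1 = a := by
              by_contra h
              have ha2 : q.1.val + 1 < a := by have := q.1.isLt; omega
              exact (hA ha2).1 hj0
            have hfbot : fil q - 1 = -(a : ℤ) := by unfold fil; omega
            rw [hfbot, gam_bot a b k (by omega)]
            simp
        have hccq : cc a b k q = gam a b k (fil q) := rfl
        rw [hccq]
        linarith [h2sum, h1sum, gam_lap a b ha hb k (fil q)]
      rw [hcount, hrec]
      linarith [hdiff]

lemma const_eq (a b : ℕ) (k : ℤ) :
    (if 0 ≤ k then (a : ℝ) * ((b : ℝ) - (k : ℝ)) / ((a : ℝ) + b)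
      else (b : ℝ) * ((a : ℝ) + (k : ℝ)) / ((a : ℝ) + b)) = - gam a b k 0 := by
  unfold gam
  by_cases h : 0 ≤ k
  · rw [if_pos h, max_eq_right h, min_eq_left h]
    push_cast
    ring
  · rw [if_neg h, max_eq_left (by omega), min_eq_right (by omega)]
    push_cast
    ring

/-- On the rectangle `[a]×[b]`, the `k`-th file statistic `I ↦ #{(i,j) ∈ I : j - i = k}`
is `c` plus a linear combination of signed toggleability statistics, with
`c = a(b-k)/(a+b)` for `k ≥ 0` and `c = b(a+k)/(a+b)` for `k < 0`; hence its average
along every rowmotion orbit is `c`. -/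
theorem rect_file_homomesy (a b : ℕ) (ha : 0 < a) (hb : 0 < b) (k : ℤ)
    (hk1 : 1 - (a : ℤ) ≤ k) (hk2 : k ≤ (b : ℤ) - 1) :
    ∃ c : Fin a × Fin b → ℝ,
      (∀ I : Finset (Fin a × Fin b), IsIdeal I →
        ((I.filter fun p : Fin a × Fin b => (p.2.val : ℤ) - (p.1.val : ℤ) = k).card : ℝ)
          = (if 0 ≤ k then (a : ℝ) * ((b : ℝ) - (k : ℝ)) / ((a : ℝ) + b)
              else (b : ℝ) * ((a : ℝ) + (k : ℝ)) / ((a : ℝ) + b))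
            + ∑ p : Fin a × Fin b, c p * Tsgn p I) ∧
      (∀ I : Finset (Fin a × Fin b), IsIdeal I → ∀ N : ℕ, 0 < N → rowmotion^[N] I = I →
        ∑ kk ∈ Finset.range N,
            (((rowmotion^[kk] I).filter
                fun p : Fin a × Fin b => (p.2.val : ℤ) - (p.1.val : ℤ) = k).card : ℝ)
          = N * (if 0 ≤ k then (a : ℝ) * ((b : ℝ) - (k : ℝ)) / ((a : ℝ) + b)
              else (b : ℝ) * ((a : ℝ) + (k : ℝ)) / ((a : ℝ) + b))) := by
  have hpt : ∀ I : Finset (Fin a × Fin b), IsIdeal I →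
      ((I.filter fun p : Fin a × Fin b => (p.2.val : ℤ) - (p.1.val : ℤ) = k).card : ℝ)
        = (if 0 ≤ k then (a : ℝ) * ((b : ℝ) - (k : ℝ)) / ((a : ℝ) + b)
            else (b : ℝ) * ((a : ℝ) + (k : ℝ)) / ((a : ℝ) + b))
          + ∑ p : Fin a × Fin b, cc a b k p * Tsgn p I := by
    intro I hI
    rw [const_eq a b k]
    exact main_ideal a b ha hb k hk1 hk2 I.card I rfl hI
  refine ⟨cc a b k, hpt, ?_⟩
  intro I hI N hN hrow
  have hIdeal : ∀ kk : ℕ, IsIdeal (rowmotion^[kk] I) := by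
    intro kk
    cases kk with
    | zero => exact hI
    | succ m => rw [Function.iterate_succ_apply']; exact rowmotion_isIdeal _
  have hcyc : ∀ p : Fin a × Fin b,
      ∑ kk ∈ Finset.range N, Tsgn p (rowmotion^[kk] I) = 0 := by
    intro p
    unfold Tsgn
    rw [Finset.sum_sub_distrib]
    have hToutTin : ∀ m : ℕ, Tout p (rowmotion^[m+1] I) = Tin p (rowmotion^[m] I) := by
      intro m
      rw [Function.iterate_succ_apply']
      unfold Tin Tout
      by_cases h : CanTogIn (rowmotion^[m] I) p
      · rw [if_pos ((canTogOut_rowmotion _ p).mpr h), if_pos h]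
      · rw [if_neg (fun hh => h ((canTogOut_rowmotion _ p).mp hh)), if_neg h]
    obtain ⟨m, rfl⟩ : ∃ m, N = m + 1 := ⟨N - 1, by omega⟩
    have h1 : ∑ kk ∈ Finset.range (m+1), Tout p (rowmotion^[kk] I)
        = ∑ kk ∈ Finset.range (m+1), Tin p (rowmotion^[kk] I) := by
      rw [Finset.sum_range_succ' (fun kk => Tout p (rowmotion^[kk] I)) m,
        Finset.sum_range_succ (fun kk => Tin p (rowmotion^[kk] I)) m]
      have h0 : Tout p (rowmotion^[0] I) = Tin p (rowmotion^[m] I) := by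
        have he : (rowmotion^[0] I : Finset (Fin a × Fin b)) = rowmotion^[m+1] I := by
          rw [hrow, Function.iterate_zero_apply]
        rw [he, hToutTin]
      rw [h0]
      congr 1
      exact Finset.sum_congr rfl (fun i _ => hToutTin i)
    rw [h1, sub_self]
  have hterm : ∀ kk ∈ Finset.range N,
      (((rowmotion^[kk] I).filter
          fun p : Fin a × Fin b => (p.2.val : ℤ) - (p.1.val : ℤ) = k).card : ℝ)
        = (if 0 ≤ k then (a : ℝ) * ((b : ℝ) - (k : ℝ)) / ((a : ℝ) + b)
            else (b : ℝ) * ((a : ℝ) + (k : ℝ)) / ((a : ℝ) + b))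
          + ∑ p : Fin a × Fin b, cc a b k p * Tsgn p (rowmotion^[kk] I) :=
    fun kk _ => hpt _ (hIdeal kk)
  rw [Finset.sum_congr rfl hterm, Finset.sum_add_distrib, Finset.sum_const,
    Finset.card_range, nsmul_eq_mul]
  have hzero : ∑ kk ∈ Finset.range N, ∑ p : Fin a × Fin b,
      cc a b k p * Tsgn p (rowmotion^[kk] I) = 0 := by
    rw [Finset.sum_comm]
    apply Finset.sum_eq_zero
    intro p _
    rw [← Finset.mul_sum, hcyc p, mul_zero]
  rw [hzero, add_zero]
end
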